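/- Assume n ≥ 2. For every 1 ≤ μ ≤ n−1, the fundamental weight ω_μ = (−1,…,−1 | 1,…,1 (μ times), 0,…,0) does not satisfy the type 1 condition, but it does satisfy the type 2 condition (condition (ii) of the type 2 criterion holds with k = m). -/

import Mathlib

noncomputable section

/-- A `gl(m+1|n+1)` weight `Λ = (Λ⁰ | Λ¹)`. -/
abbrev Weight (m n : ℕ) : Type := (Fin (m + 1) → ℝ) × (Fin (n + 1) → ℝ)

namespace Weight

/-- The graded bilinear form `(Λ,Λ') = Σ Λ⁰ᵢ Λ'⁰ᵢ − Σ Λ¹_μ Λ'¹_μ`. -/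
def form {m n : ℕ} (Λ Λ' : Weight m n) : ℝ :=
  (∑ i, Λ.1 i * Λ'.1 i) - (∑ μ, Λ.2 μ * Λ'.2 μ)

/-- The fundamental weight `ε_j`. -/
def eps (m n : ℕ) (j : Fin (m + 1)) : Weight m n :=
  (fun i => if i = j then 1 else 0, 0)

/-- The fundamental weight `δ_ν`. -/
def del (m n : ℕ) (ν : Fin (n + 1)) : Weight m n :=
  (0, fun μ => if μ = ν then 1 else 0)

/-- The Weyl vector `ρ` (graded half-sum of positive roots), for `gl(m+1|n+1)`. -/
def rho (m n : ℕ) : Weight m n :=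
  (fun j => (((m : ℝ) + 1) - ((n : ℝ) + 1) - 2 * (((j : ℕ) : ℝ) + 1) + 1) / 2,
   fun ν => (((m : ℝ) + 1) + ((n : ℝ) + 1) - 2 * (((ν : ℕ) : ℝ) + 1) + 1) / 2)

/-- The type 1 condition: (i) `(Λ+ρ, ε_m − δ_n) > 0`, or (ii) there is an odd index `μ`
with `(Λ+ρ, ε_m − δ_μ) = 0` and `Λ¹_μ = Λ¹_n`. -/
def Type1 {m n : ℕ} (Λ : Weight m n) : Prop :=
  0 < form (Λ + rho m n) (eps m n (Fin.last m) - del m n (Fin.last n)) ∨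
    ∃ μ : Fin (n + 1),
      form (Λ + rho m n) (eps m n (Fin.last m) - del m n μ) = 0 ∧
        Λ.2 μ = Λ.2 (Fin.last n)

/-- The type 2 condition: (i) `(Λ+ρ, ε_1 − δ_1) < 0`, or (ii) there is an even index `k`
with `(Λ+ρ, ε_k − δ_1) = 0` and `Λ⁰_k = Λ⁰_1`. -/
def Type2 {m n : ℕ} (Λ : Weight m n) : Prop :=
  form (Λ + rho m n) (eps m n 0 - del m n 0) < 0 ∨
    ∃ k : Fin (m + 1),
      form (Λ + rho m n) (eps m n k - del m n 0) = 0 ∧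
        Λ.1 k = Λ.1 0

/-- The weight `ε = (1,…,1 | 0,…,0)`. -/
def epsW (m n : ℕ) : Weight m n := (fun _ => 1, fun _ => 0)

/-- The weight `δ = (−1,…,−1 | 1,…,1)`. -/
def deltaW (m n : ℕ) : Weight m n := (fun _ => -1, fun _ => 1)

end Weight

open Weight

/-- The fundamental weight `ω_μ = (−1,…,−1 | 1,…,1 (μ times), 0,…,0)`
(for the 1-based index `μ+1 ∈ {1,…,n}`, with `μ : Fin (n+1)` 0-based). -/
def omega1 (m n : ℕ) (μ : Fin (n + 1)) : Weight m n :=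
  (fun _ => -1, fun ν => if (ν : ℕ) ≤ (μ : ℕ) then 1 else 0)

namespace Weight

variable {m n : ℕ}

lemma form_eps_sub_del (Λ : Weight m n) (j : Fin (m + 1)) (ν : Fin (n + 1)) :
    form Λ (eps m n j - del m n ν) = Λ.1 j + Λ.2 ν := by
  simp [form, eps, del, mul_ite]

lemma form_add_rho_eps_sub_del (Λ : Weight m n) (j : Fin (m + 1)) (ν : Fin (n + 1)) :
    form (Λ + rho m n) (eps m n j - del m n ν) = Λ.1 j + Λ.2 ν + m - j - ν := by
  rw [form_eps_sub_del]
  simp only [rho, Prod.fst_add, Prod.snd_add, Pi.add_apply]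
  ring

lemma form_add_rho_eps_last_sub_del (Λ : Weight m n) (ν : Fin (n + 1)) :
    form (Λ + rho m n) (eps m n (Fin.last m) - del m n ν) =
      Λ.1 (Fin.last m) + Λ.2 ν - ν := by
  rw [form_add_rho_eps_sub_del, Fin.val_last]
  ring

/-- The first alternative of the type 1 condition gives `Λ⁰_m + Λ¹_n > n`, the second one
`Λ⁰_m + Λ¹_n = μ`; both are nonnegative. -/
lemma not_type1_of_last_add_last_neg {Λ : Weight m n}
    (h : Λ.1 (Fin.last m) + Λ.2 (Fin.last n) < 0) : ¬ Type1 Λ := by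
  rintro (hpos | ⟨μ, hzero, hμ⟩)
  · rw [form_add_rho_eps_last_sub_del] at hpos
    have : (0 : ℝ) ≤ (Fin.last n : ℕ) := Nat.cast_nonneg _
    linarith
  · rw [form_add_rho_eps_last_sub_del, hμ] at hzero
    have : (0 : ℝ) ≤ (μ : ℕ) := Nat.cast_nonneg _
    linarith

end Weight

lemma omega1_snd_of_le {m n : ℕ} {μ ν : Fin (n + 1)} (h : ν ≤ μ) : (omega1 m n μ).2 ν = 1 :=
  if_pos h

lemma omega1_snd_of_lt {m n : ℕ} {μ ν : Fin (n + 1)} (h : μ < ν) : (omega1 m n μ).2 ν = 0 :=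
  if_neg (not_le.mpr h)

/-- for `gl(m+1|n+2)` (so the number of odd indices is at least 2) and
every 1-based odd index `μ+1 ∈ {1,…,n+1}` (i.e. `1 ≤ μ ≤ n−1` in the paper's notation),
the weight `ω_μ` does not satisfy the type 1 condition, but satisfies the type 2
condition, condition (ii) of the type 2 criterion holding with `k = m` (the last even
index). -/
theorem statement7 (m n : ℕ) (μ : Fin (n + 1)) :
    ¬ Type1 (omega1 m (n + 1) μ.castSucc) ∧
    (form (omega1 m (n + 1) μ.castSucc + rho m (n + 1))
        (eps m (n + 1) (Fin.last m) - del m (n + 1) 0) = 0 ∧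
      (omega1 m (n + 1) μ.castSucc).1 (Fin.last m) =
        (omega1 m (n + 1) μ.castSucc).1 0) ∧
    Type2 (omega1 m (n + 1) μ.castSucc) := by
  have hlast : (omega1 m (n + 1) μ.castSucc).2 (Fin.last (n + 1)) = 0 :=
    omega1_snd_of_lt (Fin.castSucc_lt_last μ)
  have hfirst : (omega1 m (n + 1) μ.castSucc).2 0 = 1 := omega1_snd_of_le (Fin.zero_le _)
  have hroot : form (omega1 m (n + 1) μ.castSucc + rho m (n + 1))
      (eps m (n + 1) (Fin.last m) - del m (n + 1) 0) = 0 := by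
    rw [form_add_rho_eps_last_sub_del, hfirst]
    simp [omega1]
  refine ⟨not_type1_of_last_add_last_neg ?_, ⟨hroot, rfl⟩, Or.inr ⟨Fin.last m, hroot, rfl⟩⟩
  rw [hlast]
  simp [omega1]
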